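/- For a bounded subset M of a Banach algebra A, the Berger–Wang radius satisfies r(L_M R_M) = r(M)^2, where r(S) = limsup_n (sup{ρ(a) : a ∈ S^n})^{1/n} and ρ(a) denotes the spectral radius of a single element (or operator). -/

import Mathlib

open scoped Pointwise
open Filter

/-- The Berger–Wang radius of a bounded subset `M` of a complex Banach algebra:
`r(M) = limsup_n (sup {ρ(a) : a ∈ M^n})^{1/n}`, where `ρ(a)` is the ordinary
spectral radius of a single element. -/
noncomputable def bwr {A : Type*} [NormedRing A] [NormedAlgebra ℂ A] (M : Set A) : ℝ :=
  limsup (fun n : ℕ =>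
    (sSup ((fun a => (spectralRadius ℂ a).toReal) '' (M ^ n))) ^ ((n : ℝ)⁻¹)) atTop

/-- Left multiplication operator `L_a : x ↦ a x`. -/
noncomputable def Lmul {A : Type*} [NormedRing A] [NormedAlgebra ℂ A] (a : A) : A →L[ℂ] A :=
  ContinuousLinearMap.mul ℂ A a

/-- Right multiplication operator `R_b : x ↦ x b`. -/
noncomputable def Rmul {A : Type*} [NormedRing A] [NormedAlgebra ℂ A] (b : A) : A →L[ℂ] A :=
  (ContinuousLinearMap.mul ℂ A).flip b

/-- The family `L_M R_M = {L_a R_b : a, b ∈ M}`. -/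
noncomputable def LR {A : Type*} [NormedRing A] [NormedAlgebra ℂ A] (M N : Set A) :
    Set (A →L[ℂ] A) :=
  {T | ∃ a ∈ M, ∃ b ∈ N, T = (Lmul a).comp (Rmul b)}

/-!
Everything reduces to the identity `sup ρ(L_P R_P) = (sup ρ(P))²` for sets `P` with bounded
spectral radii, applied to `P = M^n` via `(L_M R_M)^n = L_{M^n} R_{M^n}`. The upper bound
`ρ(L_a R_b) ≤ ρ(a) ρ(b)` follows from Gelfand's formula and `‖(L_a R_b)^n‖ ≤ ‖a^n‖ ‖b^n‖`; the
lower bound `ρ(a)² ≤ ρ(a²) ≤ ρ(L_a R_a)` from Gelfand's formula and `(L_a R_a)^n 1 = a^(2n)`.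
Squaring then commutes with the `limsup`, the sequence being nonnegative and bounded.
-/

open scoped ENNReal Topology

lemma Filter.limsup_sq_of_nonneg {α : Type*} {l : Filter α} [l.NeBot] {f : α → ℝ}
    (hf₀ : ∀ x, 0 ≤ f x) (hf : IsBoundedUnder (· ≤ ·) l f) :
    limsup (fun x => f x ^ 2) l = limsup f l ^ 2 := by
  -- a monotone extension of squaring from `[0, ∞)`
  have hsq : Monotone fun x : ℝ => max x 0 ^ 2 := fun x y hxy =>
    pow_le_pow_left₀ (le_max_right x 0) (max_le_max hxy le_rfl) 2
  have hlim₀ : 0 ≤ limsup f l :=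
    le_limsup_of_frequently_le (Frequently.of_forall hf₀) hf
  have := hsq.map_limsup_of_continuousAt f
    ((continuous_id.max continuous_const).pow 2).continuousAt hf
    (isBoundedUnder_of_eventually_ge (Eventually.of_forall hf₀)).isCoboundedUnder_le
  simp only [max_eq_left hlim₀] at this
  rw [this]
  simp only [Function.comp_def, max_eq_left (hf₀ _)]

lemma norm_le_pow_of_mem_pow {R : Type*} [SeminormedRing R] {M : Set R} {C : ℝ}
    (hC : ∀ a ∈ M, ‖a‖ ≤ C) {n : ℕ} (hn : n ≠ 0) {a : R} (ha : a ∈ M ^ n) : ‖a‖ ≤ C ^ n := by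
  induction n generalizing a with
  | zero => exact absurd rfl hn
  | succ n ih =>
    rcases Nat.eq_zero_or_pos n with rfl | hpos
    · simpa using hC a (by simpa using ha)
    obtain ⟨b, hb, c, hc, rfl⟩ := ha
    calc ‖b * c‖ ≤ ‖b‖ * ‖c‖ := norm_mul_le b c
      _ ≤ C ^ n * C := mul_le_mul (ih hpos.ne' hb) (hC c hc) (norm_nonneg c)
          ((norm_nonneg b).trans (ih hpos.ne' hb))
      _ = C ^ (n + 1) := (pow_succ C n).symm

namespace spectrum

section NormedField

variable {𝕜 A : Type*} [NormedField 𝕜] [NormedRing A] [NormedAlgebra 𝕜 A] [CompleteSpace A]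

lemma spectralRadius_ne_top (a : A) : spectralRadius 𝕜 a ≠ ∞ := by
  refine ne_top_of_le_ne_top ?_ (spectralRadius_le_pow_nnnorm_pow_one_div 𝕜 a 0)
  simp [ENNReal.mul_ne_top]

lemma toReal_spectralRadius_pow_le (a : A) {n : ℕ} (hn : n ≠ 0) :
    (spectralRadius 𝕜 a).toReal ^ n ≤ (spectralRadius 𝕜 (a ^ n)).toReal := by
  rw [← ENNReal.toReal_pow]
  exact ENNReal.toReal_mono (spectralRadius_ne_top _) (spectralRadius_pow_le a n hn)

end NormedField

section Complex

variable {A B E : Type*} [NormedRing A] [NormedAlgebra ℂ A] [CompleteSpace A]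
  [NormedRing B] [NormedAlgebra ℂ B] [CompleteSpace B]
  [NormedRing E] [NormedAlgebra ℂ E] [CompleteSpace E]

lemma tendsto_norm_pow_rpow_toReal_spectralRadius (a : A) :
    Tendsto (fun n : ℕ => ‖a ^ n‖ ^ (1 / n : ℝ)) atTop (𝓝 (spectralRadius ℂ a).toReal) := by
  have := ((ENNReal.tendsto_toReal (spectralRadius_ne_top a)).comp
    (pow_norm_pow_one_div_tendsto_nhds_spectralRadius a))
  simpa [Function.comp_def, ENNReal.toReal_ofReal, Real.rpow_nonneg] using this

lemma toReal_spectralRadius_le_norm (a : A) : (spectralRadius ℂ a).toReal ≤ ‖a‖ := by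
  refine le_of_tendsto (tendsto_norm_pow_rpow_toReal_spectralRadius a) ?_
  filter_upwards [eventually_gt_atTop 0] with n hn
  calc ‖a ^ n‖ ^ (1 / n : ℝ) ≤ (‖a‖ ^ n) ^ (1 / n : ℝ) := by
        gcongr; exact norm_pow_le' a hn
    _ = ‖a‖ := by rw [one_div, Real.pow_rpow_inv_natCast (norm_nonneg a) hn.ne']

lemma toReal_spectralRadius_le_of_norm_pow_le {a : A} {b : B} {c : ℝ}
    (h : ∀ n, ‖a ^ n‖ ≤ c * ‖b ^ n‖) :
    (spectralRadius ℂ a).toReal ≤ (spectralRadius ℂ b).toReal := by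
  set c' := max c 1
  have hc' : 0 < c' := zero_lt_one.trans_le (le_max_right c 1)
  have hlim : Tendsto (fun n : ℕ => c' ^ (1 / n : ℝ) * ‖b ^ n‖ ^ (1 / n : ℝ)) atTop
      (𝓝 (1 * (spectralRadius ℂ b).toReal)) := by
    refine Tendsto.mul ?_ (tendsto_norm_pow_rpow_toReal_spectralRadius b)
    simpa [Function.comp_def] using ((Real.continuousAt_const_rpow hc'.ne').tendsto.comp
      tendsto_one_div_atTop_nhds_zero_nat)
  rw [← one_mul (spectralRadius ℂ b).toReal]
  refine le_of_tendsto_of_tendsto' (tendsto_norm_pow_rpow_toReal_spectralRadius a) hlim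
    fun n => ?_
  rw [← Real.mul_rpow hc'.le (norm_nonneg _)]
  gcongr
  exact (h n).trans (by gcongr; exact le_max_left c 1)

lemma toReal_spectralRadius_le_mul_of_norm_pow_le {a : A} {b : B} {x : E}
    (h : ∀ n, ‖x ^ n‖ ≤ ‖a ^ n‖ * ‖b ^ n‖) :
    (spectralRadius ℂ x).toReal ≤ (spectralRadius ℂ a).toReal * (spectralRadius ℂ b).toReal := by
  refine le_of_tendsto_of_tendsto' (tendsto_norm_pow_rpow_toReal_spectralRadius x)
    ((tendsto_norm_pow_rpow_toReal_spectralRadius a).mul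
      (tendsto_norm_pow_rpow_toReal_spectralRadius b)) fun n => ?_
  rw [← Real.mul_rpow (norm_nonneg _) (norm_nonneg _)]
  gcongr
  exact h n

end Complex

end spectrum

section LeftRightMultiplication

variable {A : Type*} [NormedRing A] [NormedAlgebra ℂ A]

@[simp]
lemma Lmul_apply (a x : A) : Lmul a x = a * x := rfl

@[simp]
lemma Rmul_apply (b x : A) : Rmul b x = x * b := rfl

lemma Lmul_comp_Rmul_one : (Lmul (1 : A)).comp (Rmul 1) = 1 := by
  ext x
  simp

lemma Lmul_comp_Rmul_mul (a b c d : A) :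
    (Lmul a).comp (Rmul b) * (Lmul c).comp (Rmul d) = (Lmul (a * c)).comp (Rmul (d * b)) := by
  ext x
  simp [mul_assoc]

lemma Lmul_comp_Rmul_pow (a b : A) (n : ℕ) :
    ((Lmul a).comp (Rmul b)) ^ n = (Lmul (a ^ n)).comp (Rmul (b ^ n)) := by
  induction n with
  | zero => simp [Lmul_comp_Rmul_one]
  | succ n ih => rw [pow_succ, ih, Lmul_comp_Rmul_mul, ← pow_succ, ← pow_succ']

lemma norm_Lmul_comp_Rmul_le (a b : A) : ‖(Lmul a).comp (Rmul b)‖ ≤ ‖a‖ * ‖b‖ :=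
  ContinuousLinearMap.opNorm_le_bound _ (by positivity) fun x =>
    calc ‖a * (x * b)‖ ≤ ‖a‖ * (‖x‖ * ‖b‖) :=
          (norm_mul_le _ _).trans (by gcongr; exact norm_mul_le x b)
      _ = ‖a‖ * ‖b‖ * ‖x‖ := by ring

lemma LR_one : LR (1 : Set A) 1 = 1 := by
  ext T
  simp [LR, Lmul_comp_Rmul_one]

lemma LR_mul (P Q R S : Set A) : LR P Q * LR R S = LR (P * R) (S * Q) := by
  ext T
  constructor
  · rintro ⟨_, ⟨a, ha, b, hb, rfl⟩, _, ⟨c, hc, d, hd, rfl⟩, rfl⟩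
    exact ⟨a * c, Set.mul_mem_mul ha hc, d * b, Set.mul_mem_mul hd hb, Lmul_comp_Rmul_mul a b c d⟩
  · rintro ⟨_, ⟨a, ha, c, hc, rfl⟩, _, ⟨d, hd, b, hb, rfl⟩, rfl⟩
    exact ⟨_, ⟨a, ha, b, hb, rfl⟩, _, ⟨c, hc, d, hd, rfl⟩, Lmul_comp_Rmul_mul a b c d⟩

lemma LR_pow (M : Set A) (n : ℕ) : LR M M ^ n = LR (M ^ n) (M ^ n) := by
  induction n with
  | zero => simp [LR_one]
  | succ n ih => rw [pow_succ, ih, LR_mul, ← pow_succ, ← pow_succ']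

variable [CompleteSpace A]

lemma toReal_spectralRadius_Lmul_comp_Rmul_le (a b : A) :
    (spectralRadius ℂ ((Lmul a).comp (Rmul b))).toReal ≤
      (spectralRadius ℂ a).toReal * (spectralRadius ℂ b).toReal :=
  spectrum.toReal_spectralRadius_le_mul_of_norm_pow_le fun n => by
    rw [Lmul_comp_Rmul_pow]
    exact norm_Lmul_comp_Rmul_le _ _

lemma sq_toReal_spectralRadius_le_Lmul_comp_Rmul (a : A) :
    (spectralRadius ℂ a).toReal ^ 2 ≤ (spectralRadius ℂ ((Lmul a).comp (Rmul a))).toReal := by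
  refine (spectrum.toReal_spectralRadius_pow_le a two_ne_zero).trans
    (spectrum.toReal_spectralRadius_le_of_norm_pow_le (c := ‖(1 : A)‖) fun n => ?_)
  calc ‖(a ^ 2) ^ n‖ = ‖((Lmul a).comp (Rmul a) ^ n) 1‖ := by
        rw [Lmul_comp_Rmul_pow, ContinuousLinearMap.comp_apply, Rmul_apply, Lmul_apply, one_mul,
          ← pow_mul, ← pow_add, two_mul]
    _ ≤ ‖(1 : A)‖ * ‖(Lmul a).comp (Rmul a) ^ n‖ := by
        rw [mul_comm]; exact ContinuousLinearMap.le_opNorm _ _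

end LeftRightMultiplication

noncomputable def supSpectralRadius {A : Type*} [NormedRing A] [NormedAlgebra ℂ A] (S : Set A) :
    ℝ :=
  sSup ((fun a => (spectralRadius ℂ a).toReal) '' S)

section SupSpectralRadius

variable {A : Type*} [NormedRing A] [NormedAlgebra ℂ A]

lemma bwr_eq_limsup_supSpectralRadius (M : Set A) :
    bwr M = limsup (fun n : ℕ => supSpectralRadius (M ^ n) ^ (n : ℝ)⁻¹) atTop :=
  rfl

lemma supSpectralRadius_nonneg (S : Set A) : 0 ≤ supSpectralRadius S :=
  Real.sSup_nonneg (by rintro _ ⟨a, -, rfl⟩; positivity)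

variable [CompleteSpace A]

lemma supSpectralRadius_LR {P : Set A}
    (hP : BddAbove ((fun a => (spectralRadius ℂ a).toReal) '' P)) :
    supSpectralRadius (LR P P) = supSpectralRadius P ^ 2 := by
  rcases P.eq_empty_or_nonempty with rfl | hne
  · simp [supSpectralRadius, LR]
  set s := supSpectralRadius P
  have hs₀ : 0 ≤ s := supSpectralRadius_nonneg P
  have hle : ∀ T ∈ LR P P, (spectralRadius ℂ T).toReal ≤ s ^ 2 := by
    rintro _ ⟨a, ha, b, hb, rfl⟩
    calc _ ≤ (spectralRadius ℂ a).toReal * (spectralRadius ℂ b).toReal :=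
          toReal_spectralRadius_Lmul_comp_Rmul_le a b
      _ ≤ s * s := mul_le_mul (le_csSup hP ⟨a, ha, rfl⟩) (le_csSup hP ⟨b, hb, rfl⟩)
          ENNReal.toReal_nonneg hs₀
      _ = s ^ 2 := (sq s).symm
  have hbdd : BddAbove ((fun T => (spectralRadius ℂ T).toReal) '' LR P P) :=
    ⟨s ^ 2, by rintro _ ⟨T, hT, rfl⟩; exact hle T hT⟩
  refine le_antisymm (Real.sSup_le (by rintro _ ⟨T, hT, rfl⟩; exact hle T hT) (by positivity))
    ((Real.le_sqrt hs₀ (supSpectralRadius_nonneg _)).mp ?_)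
  refine Real.sSup_le ?_ (Real.sqrt_nonneg _)
  rintro _ ⟨a, ha, rfl⟩
  exact Real.le_sqrt_of_sq_le ((sq_toReal_spectralRadius_le_Lmul_comp_Rmul a).trans
    (le_csSup hbdd ⟨_, ⟨a, ha, a, ha, rfl⟩, rfl⟩))

lemma toReal_spectralRadius_le_pow_of_mem_pow {M : Set A} {C : ℝ} (hC : ∀ a ∈ M, ‖a‖ ≤ C)
    {n : ℕ} (hn : n ≠ 0) {a : A} (ha : a ∈ M ^ n) : (spectralRadius ℂ a).toReal ≤ C ^ n :=
  (spectrum.toReal_spectralRadius_le_norm a).trans (norm_le_pow_of_mem_pow hC hn ha)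

lemma bddAbove_toReal_spectralRadius_image_pow {M : Set A} (hM : Bornology.IsBounded M)
    (n : ℕ) : BddAbove ((fun a => (spectralRadius ℂ a).toReal) '' (M ^ n)) := by
  obtain ⟨C, -, hC⟩ := hM.exists_pos_norm_le
  rcases n with _ | n
  · simp
  · exact ⟨C ^ (n + 1), by
      rintro _ ⟨a, ha, rfl⟩; exact toReal_spectralRadius_le_pow_of_mem_pow hC n.succ_ne_zero ha⟩

lemma isBoundedUnder_supSpectralRadius_pow_rpow_inv {M : Set A} (hM : Bornology.IsBounded M) :
    IsBoundedUnder (· ≤ ·) atTop fun n : ℕ => supSpectralRadius (M ^ n) ^ (n : ℝ)⁻¹ := by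
  obtain ⟨C, hC₀, hC⟩ := hM.exists_pos_norm_le
  refine isBoundedUnder_of_eventually_le (a := C) ?_
  filter_upwards [eventually_ne_atTop 0] with n hn
  calc supSpectralRadius (M ^ n) ^ (n : ℝ)⁻¹ ≤ (C ^ n) ^ (n : ℝ)⁻¹ := by
        gcongr
        · exact supSpectralRadius_nonneg _
        · exact Real.sSup_le (by
            rintro _ ⟨a, ha, rfl⟩; exact toReal_spectralRadius_le_pow_of_mem_pow hC hn ha)
            (by positivity)
    _ = C := Real.pow_rpow_inv_natCast hC₀.le hn

end SupSpectralRadius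

/-- for a bounded subset `M` of a complex Banach algebra,
`r(L_M R_M) = r(M)^2`. -/
theorem bwr_LR_eq_sq {A : Type*} [NormedRing A] [NormedAlgebra ℂ A] [CompleteSpace A]
    (M : Set A) (hM : Bornology.IsBounded M) :
    bwr (LR M M) = (bwr M) ^ 2 := by
  calc bwr (LR M M)
      = limsup (fun n : ℕ => (supSpectralRadius (M ^ n) ^ (n : ℝ)⁻¹) ^ 2) atTop := by
        simp only [bwr_eq_limsup_supSpectralRadius, LR_pow,
          supSpectralRadius_LR (bddAbove_toReal_spectralRadius_image_pow hM _),
          Real.rpow_pow_comm (supSpectralRadius_nonneg _)]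
    _ = bwr M ^ 2 :=
        limsup_sq_of_nonneg (fun n => Real.rpow_nonneg (supSpectralRadius_nonneg _) _)
          (isBoundedUnder_supSpectralRadius_pow_rpow_inv hM)
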